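/- In the setting of the main theorem (μ = ν^ℤ product, f local mean-zero with ‖f‖² = ∑_z ⟨f, τ_z f⟩ = 0, f depending on coordinates in {−s_f,…,s_f}), the function g with f = τg − g constructed via the Fourier expansion satisfies the bound ⟨g²⟩ ≤ (2s_f + 1)² ⟨f²⟩. -/

import Mathlib

/-!
Write `E_c` for the conditional expectation given the coordinates `≤ c` (for the product
measure it integrates out the other coordinates) and `P_k = E_s[f ∘ τ_k]`. Locality gives
`P_0 = f`, and independence with `⟨f⟩ = 0` gives `P_k = 0` for `k > 2s`. Put
`g = -∑_{k ≤ 2s} P_k`; since `P_k ∘ τ = E_{s+1}[f ∘ τ_{k+1}]`, one gets `g ∘ τ - g = f - R` with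
`R = ∑_{k ≤ 2s} (E_{s+1} - E_s)[f ∘ τ_{k+1}]`. Expanding `⟨R²⟩` in the Gram matrix
`t j k = ⟨P_j P_k⟩` telescopes to `t 0 0 + 2 ∑_{k=1}^{2s} t 0 k = ∑_z ⟨f · f ∘ τ_z⟩ = 0`,
so `R = 0`.
Finally `⟨P_k²⟩ ≤ ⟨f²⟩` and Cauchy–Schwarz over the `2s + 1` summands give the bound on `⟨g²⟩`.
-/

open MeasureTheory ProbabilityTheory

/-- A function on `X^ℤ` is local if it depends only on finitely many coordinates. -/
def IsLocal {X : Type*} (f : (ℤ → X) → ℝ) : Prop :=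
  ∃ S : Finset ℤ, ∀ η η' : ℤ → X, (∀ x ∈ S, η x = η' x) → f η = f η'

/-- `f` depends only on the coordinates in the window `{-s, …, s}`. -/
def DependsOnWindow {X : Type*} (s : ℕ) (f : (ℤ → X) → ℝ) : Prop :=
  ∀ η η' : ℤ → X, (∀ x : ℤ, |x| ≤ (s : ℤ) → η x = η' x) → f η = f η'

/-- `μ` is the i.i.d. product measure `ν^ℤ` on `X^ℤ`. -/
def IsIIDProduct {X : Type*} [MeasurableSpace X] (ν : Measure X)
    (μ : Measure (ℤ → X)) : Prop :=
  iIndepFun (m := fun _ : ℤ => (inferInstance : MeasurableSpace X)) (fun x η => η x) μ ∧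
  ∀ x : ℤ, μ.map (fun η => η x) = ν

open Set

section Splice

variable {ι : Type*} {X : ι → Type*}

noncomputable def splice (I : Set ι) (η ζ : ∀ i, X i) : ∀ i, X i := by
  classical exact I.piecewise η ζ

lemma splice_of_mem {I : Set ι} {i : ι} (hi : i ∈ I) (η ζ : ∀ i, X i) :
    splice I η ζ i = η i := by
  classical exact I.piecewise_eq_of_mem η ζ hi

lemma splice_of_notMem {I : Set ι} {i : ι} (hi : i ∉ I) (η ζ : ∀ i, X i) :
    splice I η ζ i = ζ i := by
  classical exact I.piecewise_eq_of_notMem η ζ hi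

variable {β : Type*} {h : (∀ i, X i) → β} {D I : Set ι}

lemma DependsOn.splice_eq_left (hh : DependsOn h D) (hDI : D ⊆ I) (η ζ : ∀ i, X i) :
    h (splice I η ζ) = h η :=
  hh fun _ hi => splice_of_mem (hDI hi) η ζ

lemma DependsOn.splice_eq_right (hh : DependsOn h D) (hID : Disjoint I D) (η ζ : ∀ i, X i) :
    h (splice I η ζ) = h ζ :=
  hh fun _ hi => splice_of_notMem (hID.notMem_of_mem_right hi) η ζ

variable [∀ i, MeasurableSpace (X i)]

lemma measurable_splice (I : Set ι) :
    Measurable fun p : (∀ i, X i) × (∀ i, X i) => splice I p.1 p.2 := by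
  refine measurable_pi_lambda _ fun i => ?_
  by_cases hi : i ∈ I
  · simpa only [splice_of_mem hi] using measurable_fst.eval
  · simpa only [splice_of_notMem hi] using measurable_snd.eval

lemma measurable_splice_right (I : Set ι) (η : ∀ i, X i) : Measurable (splice I η) :=
  (measurable_splice I).comp (measurable_const.prodMk measurable_id)

end Splice

namespace MeasureTheory.Measure

variable {ι : Type*} {X : ι → Type*} [∀ i, MeasurableSpace (X i)] (ν : ∀ i, Measure (X i))
  [∀ i, IsProbabilityMeasure (ν i)]

lemma infinitePi_prod_map_splice (I : Set ι) :
    ((infinitePi ν).prod (infinitePi ν)).map (fun p => splice I p.1 p.2) = infinitePi ν := by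
  classical
  refine eq_infinitePi ν fun s t ht => ?_
  have hpre : (fun p : (∀ i, X i) × (∀ i, X i) => splice I p.1 p.2) ⁻¹' (s : Set ι).pi t =
      ((s.filter (· ∈ I) : Set ι).pi t) ×ˢ ((s.filter (· ∉ I) : Set ι).pi t) := by
    ext p
    simp only [mem_preimage, mem_pi, mem_prod, Finset.coe_filter, mem_ofPred_eq]
    refine ⟨fun hp => ⟨fun i hi => ?_, fun i hi => ?_⟩, fun ⟨h1, h2⟩ i hi => ?_⟩
    · simpa only [splice_of_mem hi.2] using hp i hi.1
    · simpa only [splice_of_notMem hi.2] using hp i hi.1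
    · by_cases hiI : i ∈ I
      · simpa only [splice_of_mem hiI] using h1 i ⟨hi, hiI⟩
      · simpa only [splice_of_notMem hiI] using h2 i ⟨hi, hiI⟩
  rw [map_apply (measurable_splice I) (.pi s.countable_toSet fun i _ => ht i), hpre, prod_prod,
    infinitePi_pi ν fun i _ => ht i, infinitePi_pi ν fun i _ => ht i,
    Finset.prod_filter_mul_prod_filter_not]

end MeasureTheory.Measure

section CondExpOn

variable {ι : Type*} {X : ι → Type*} [∀ i, MeasurableSpace (X i)]

/-- For a product measure `μ`, this is a pointwise version of the conditional expectation of `h`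
given the coordinates in `I`. -/
noncomputable def condExpOn (μ : Measure (∀ i, X i)) (I : Set ι) (h : (∀ i, X i) → ℝ)
    (η : ∀ i, X i) : ℝ :=
  ∫ ζ, h (splice I η ζ) ∂μ

variable {μ : Measure (∀ i, X i)} {I D : Set ι} {h u : (∀ i, X i) → ℝ}

lemma DependsOn.condExpOn (hh : DependsOn h D) : DependsOn (condExpOn μ I h) (I ∩ D) := by
  intro η η' hag
  refine integral_congr_ae (.of_forall fun ζ => hh fun i hi => ?_)
  by_cases hiI : i ∈ I
  · simp only [splice_of_mem hiI]
    exact hag i ⟨hiI, hi⟩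
  · simp only [splice_of_notMem hiI]

lemma dependsOn_condExpOn : DependsOn (condExpOn μ I h) I := by
  simpa using (dependsOn_univ h).condExpOn (μ := μ) (I := I)

lemma condExpOn_of_subset [IsProbabilityMeasure μ] (hh : DependsOn h D) (hDI : D ⊆ I) :
    condExpOn μ I h = h := by
  funext η
  simp [condExpOn, hh.splice_eq_left hDI]

lemma condExpOn_of_disjoint (hh : DependsOn h D) (hID : Disjoint I D) :
    condExpOn μ I h = fun _ => ∫ η, h η ∂μ := by
  funext η
  simp only [condExpOn, hh.splice_eq_right hID]

lemma stronglyMeasurable_condExpOn [SFinite μ] (hm : Measurable h) :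
    StronglyMeasurable (condExpOn μ I h) :=
  (hm.comp (measurable_splice I)).stronglyMeasurable.integral_prod_right'

end CondExpOn

section InfinitePi

variable {ι : Type*} {X : ι → Type*} [∀ i, MeasurableSpace (X i)] {ν : ∀ i, Measure (X i)}
  [∀ i, IsProbabilityMeasure (ν i)] {I : Set ι} {h u : (∀ i, X i) → ℝ}

local notation "μ" => Measure.infinitePi ν

lemma measurePreserving_splice (I : Set ι) :
    MeasurePreserving (fun p : (∀ i, X i) × (∀ i, X i) => splice I p.1 p.2) (Measure.prod μ μ) μ :=
  ⟨measurable_splice I, Measure.infinitePi_prod_map_splice ν I⟩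

lemma integrable_condExpOn (hu : Integrable u μ) : Integrable (condExpOn μ I u) μ :=
  ((measurePreserving_splice I).integrable_comp hu.1 |>.mpr hu).integral_prod_left

lemma integral_condExpOn (hu : Integrable u μ) :
    ∫ η, condExpOn μ I u η ∂μ = ∫ η, u η ∂μ := by
  have hmp := measurePreserving_splice (ν := ν) I
  have hint : Integrable (fun p => u (splice I p.1 p.2)) (Measure.prod μ μ) :=
    (hmp.integrable_comp hu.1).mpr hu
  show ∫ η, ∫ ζ, u (splice I η ζ) ∂μ ∂μ = _
  rw [← integral_prod _ hint,
    ← integral_map hmp.measurable.aemeasurable (by rw [hmp.map_eq]; exact hu.1), hmp.map_eq]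

lemma integral_condExpOn_mul (hh : MemLp h 2 μ) (hu : MemLp u 2 μ) (huI : DependsOn u I) :
    ∫ η, condExpOn μ I h η * u η ∂μ = ∫ η, h η * u η ∂μ := by
  rw [← integral_condExpOn (I := I) (u := fun η => h η * u η) (hh.integrable_mul hu)]
  simp only [condExpOn, huI.splice_eq_left subset_rfl, integral_mul_const]

lemma ae_sq_condExpOn_le (hm : Measurable h) (hh : MemLp h 2 μ) :
    ∀ᵐ η ∂μ, condExpOn μ I h η ^ 2 ≤ condExpOn μ I (fun ζ => h ζ ^ 2) η := by
  have hsq := (measurePreserving_splice (ν := ν) I).integrable_comp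
    (hm.pow_const 2).aestronglyMeasurable |>.mpr (hh.integrable_sq)
  filter_upwards [hsq.prod_right_ae] with η hη
  have hv : MemLp (fun ζ => h (splice I η ζ)) 2 μ :=
    (memLp_two_iff_integrable_sq
      (hm.comp (measurable_splice_right I η)).aestronglyMeasurable).mpr hη
  have hvar := variance_nonneg (fun ζ => h (splice I η ζ)) μ
  rw [variance_eq_sub hv] at hvar
  simpa [condExpOn, sub_nonneg] using hvar

lemma memLp_condExpOn (hm : Measurable h) (hh : MemLp h 2 μ) :
    MemLp (condExpOn μ I h) 2 μ := by
  refine (memLp_two_iff_integrable_sq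
    (stronglyMeasurable_condExpOn hm).aestronglyMeasurable).mpr ?_
  refine (integrable_condExpOn (I := I) hh.integrable_sq).mono' ?_ ?_
  · exact ((stronglyMeasurable_condExpOn hm).measurable.pow_const 2).aestronglyMeasurable
  · filter_upwards [ae_sq_condExpOn_le (I := I) hm hh] with η hη
    rwa [Real.norm_eq_abs, abs_of_nonneg (sq_nonneg _)]

lemma integral_sq_condExpOn_le (hm : Measurable h) (hh : MemLp h 2 μ) :
    ∫ η, condExpOn μ I h η ^ 2 ∂μ ≤ ∫ η, h η ^ 2 ∂μ := by
  rw [← integral_condExpOn (I := I) hh.integrable_sq]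
  exact integral_mono_ae (memLp_condExpOn hm hh).integrable_sq
    (integrable_condExpOn hh.integrable_sq) (ae_sq_condExpOn_le hm hh)

lemma exists_measurable_dependsOn_ae_eq {D : Set ι}
    (hu : AEStronglyMeasurable u μ) (hD : DependsOn u D) :
    ∃ v, Measurable v ∧ DependsOn v D ∧ u =ᵐ[μ] v := by
  -- freeze the coordinates off `D` at a generic `η₀`, one for which
  -- `u (splice Dᶜ η₀ ζ) = hu.mk u (splice Dᶜ η₀ ζ)` for almost every `ζ`
  have hae := Measure.ae_ae_of_ae_prod <|
    (measurePreserving_splice Dᶜ).quasiMeasurePreserving.ae_eq_comp hu.ae_eq_mk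
  obtain ⟨η₀, hη₀⟩ := hae.exists
  refine ⟨fun ζ => hu.mk u (splice Dᶜ η₀ ζ),
    hu.stronglyMeasurable_mk.measurable.comp (measurable_splice_right Dᶜ η₀),
    fun ζ ζ' hag => congrArg (hu.mk u) (funext fun i => ?_), ?_⟩
  · by_cases hi : i ∈ D
    · simp only [splice_of_notMem (notMem_compl_iff.mpr hi), hag i hi]
    · simp only [splice_of_mem (mem_compl hi)]
  · filter_upwards [hη₀] with ζ hζ
    exact (hD.splice_eq_right disjoint_compl_left η₀ ζ).symm.trans hζ

end InfinitePi

section SumsOfSquares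

variable {α ι : Type*} [MeasurableSpace α] {μ : Measure α} {s : Finset ι} {A : ι → α → ℝ}

lemma integral_sq_finsetSum (hA : ∀ i ∈ s, MemLp (A i) 2 μ) :
    ∫ x, (∑ i ∈ s, A i x) ^ 2 ∂μ = ∑ i ∈ s, ∑ j ∈ s, ∫ x, A i x * A j x ∂μ := by
  have hint : ∀ i ∈ s, ∀ j ∈ s, Integrable (fun x => A i x * A j x) μ :=
    fun i hi j hj => (hA i hi).integrable_mul (hA j hj)
  simp_rw [sq, Finset.sum_mul_sum]
  rw [integral_finsetSum _ fun i hi => integrable_finsetSum _ (hint i hi)]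
  exact Finset.sum_congr rfl fun i hi => integral_finsetSum _ (hint i hi)

lemma integral_sq_finsetSum_le {C : ℝ} (hA : ∀ i ∈ s, MemLp (A i) 2 μ)
    (hC : ∀ i ∈ s, ∫ x, A i x ^ 2 ∂μ ≤ C) :
    ∫ x, (∑ i ∈ s, A i x) ^ 2 ∂μ ≤ (s.card : ℝ) ^ 2 * C := by
  have hsq : ∀ i ∈ s, Integrable (fun x => A i x ^ 2) μ := fun i hi => (hA i hi).integrable_sq
  calc ∫ x, (∑ i ∈ s, A i x) ^ 2 ∂μ ≤ ∫ x, s.card * ∑ i ∈ s, A i x ^ 2 ∂μ :=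
        integral_mono (memLp_finsetSum s hA).integrable_sq
          ((integrable_finsetSum s hsq).const_mul _) fun x => sq_sum_le_card_mul_sum_sq
    _ = s.card * ∑ i ∈ s, ∫ x, A i x ^ 2 ∂μ := by
        rw [integral_const_mul, integral_finsetSum s hsq]
    _ ≤ s.card * (s.card * C) := by
        gcongr
        simpa using Finset.sum_le_card_nsmul s _ C hC
    _ = (s.card : ℝ) ^ 2 * C := by ring

lemma integral_sub_mul_sub {u₁ v₁ u₂ v₂ : α → ℝ} (hu₁ : MemLp u₁ 2 μ) (hv₁ : MemLp v₁ 2 μ)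
    (hu₂ : MemLp u₂ 2 μ) (hv₂ : MemLp v₂ 2 μ) :
    ∫ x, (u₁ x - v₁ x) * (u₂ x - v₂ x) ∂μ = ∫ x, u₁ x * u₂ x ∂μ - ∫ x, u₁ x * v₂ x ∂μ -
      (∫ x, v₁ x * u₂ x ∂μ - ∫ x, v₁ x * v₂ x ∂μ) := by
  have hexp : (fun x => (u₁ x - v₁ x) * (u₂ x - v₂ x)) =
      fun x => u₁ x * u₂ x - u₁ x * v₂ x - (v₁ x * u₂ x - v₁ x * v₂ x) := by
    funext x
    ring
  have h₁₁ : Integrable (fun x => u₁ x * u₂ x) μ := hu₁.integrable_mul hu₂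
  have h₁₂ : Integrable (fun x => u₁ x * v₂ x) μ := hu₁.integrable_mul hv₂
  have h₂₁ : Integrable (fun x => v₁ x * u₂ x) μ := hv₁.integrable_mul hu₂
  have h₂₂ : Integrable (fun x => v₁ x * v₂ x) μ := hv₁.integrable_mul hv₂
  rw [hexp, integral_sub (h₁₁.sub' h₁₂) (h₂₁.sub' h₂₂), integral_sub h₁₁ h₁₂, integral_sub h₂₁ h₂₂]

end SumsOfSquares

lemma sum_range_sum_range_sub_succ {M : Type*} [AddCommGroup M] (t : ℕ → ℕ → M) (m : ℕ) (hrow : ∀ k, t (m + 1) k = 0)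
    (hcol : ∀ j, t j (m + 1) = 0) :
    ∑ j ∈ Finset.range (m + 1), ∑ k ∈ Finset.range (m + 1), (t j k - t (j + 1) (k + 1)) =
      t 0 0 + ∑ k ∈ Finset.range m, (t 0 (k + 1) + t (k + 1) 0) := by
  have h1 : ∑ j ∈ Finset.range (m + 1), ∑ k ∈ Finset.range (m + 1), t j k =
      t 0 0 + ∑ k ∈ Finset.range m, (t 0 (k + 1) + t (k + 1) 0) +
        ∑ j ∈ Finset.range m, ∑ k ∈ Finset.range m, t (j + 1) (k + 1) := by
    simp only [Finset.sum_range_succ' _ m, Finset.sum_add_distrib]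
    abel
  have h2 : ∑ j ∈ Finset.range (m + 1), ∑ k ∈ Finset.range (m + 1), t (j + 1) (k + 1) =
      ∑ j ∈ Finset.range m, ∑ k ∈ Finset.range m, t (j + 1) (k + 1) := by
    simp only [Finset.sum_range_succ _ m, hrow, hcol, Finset.sum_const_zero, add_zero]
  simp only [Finset.sum_sub_distrib, h1, h2, add_sub_cancel_right]

lemma sum_Icc_neg_eq_of_even {M : Type*} [AddCommMonoid M] {a : ℤ → M}
    (heven : ∀ z, a (-z) = a z) (m : ℕ) :
    ∑ z ∈ Finset.Icc (-(m : ℤ)) m, a z = a 0 + 2 • ∑ k ∈ Finset.range m, a (k + 1) := by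
  induction m with
  | zero => simp
  | succ m ih =>
    have hIcc : Finset.Icc (-((m + 1 : ℕ) : ℤ)) (m + 1 : ℕ) =
        insert (-(m + 1 : ℤ)) (insert (m + 1 : ℤ) (Finset.Icc (-(m : ℤ)) m)) := by
      ext z
      simp only [Finset.mem_Icc, Finset.mem_insert]
      omega
    rw [hIcc, Finset.sum_insert (by simp; omega), Finset.sum_insert (by simp), ih, heven,
      Finset.sum_range_succ, nsmul_add, two_nsmul (a _)]
    abel

lemma finsum_eq_of_even {M : Type*} [AddCommMonoid M] {a : ℤ → M} (m : ℕ)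
    (heven : ∀ z, a (-z) = a z) (hsupp : ∀ z, (m : ℤ) < |z| → a z = 0) :
    ∑ᶠ z, a z = a 0 + 2 • ∑ k ∈ Finset.range m, a (k + 1) := by
  rw [finsum_eq_sum_of_support_subset a (s := Finset.Icc (-(m : ℤ)) m) fun z hz => ?_,
    sum_Icc_neg_eq_of_even heven]
  by_contra hzm
  rw [Finset.coe_Icc, Set.mem_Icc] at hzm
  exact hz (hsupp z (lt_abs.mpr (by omega)))

section Shift

variable {X : Type*}

def shift (z : ℤ) (η : ℤ → X) : ℤ → X := fun x => η (x + z)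

lemma shift_zero : shift 0 = (id : (ℤ → X) → ℤ → X) := by
  funext η x
  simp [shift]

lemma shift_shift (y z : ℤ) (η : ℤ → X) : shift y (shift z η) = shift (y + z) η := by
  funext x
  simp only [shift, add_assoc]

lemma DependsOn.comp_shift {h : (ℤ → X) → ℝ} {a b : ℤ} (hh : DependsOn h (Icc a b)) (z : ℤ) :
    DependsOn (h ∘ shift z) (Icc (a + z) (b + z)) := fun η η' hag =>
  hh fun x hx => hag (x + z) ⟨by linarith [hx.1], by linarith [hx.2]⟩

variable [MeasurableSpace X]

lemma shift_eq_piCongrLeft (z : ℤ) :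
    shift z = ⇑(MeasurableEquiv.piCongrLeft (fun _ : ℤ => X) (Equiv.addRight (-z))) := by
  funext η x
  simpa [shift, MeasurableEquiv.coe_piCongrLeft] using
    (Equiv.piCongrLeft_apply_apply (fun _ : ℤ => X) (Equiv.addRight (-z)) η (x + z)).symm

lemma measurableEmbedding_shift (z : ℤ) : MeasurableEmbedding (shift (X := X) z) := by
  rw [shift_eq_piCongrLeft]
  exact MeasurableEquiv.measurableEmbedding _

lemma measurePreserving_shift (ν : Measure X) [IsProbabilityMeasure ν] (z : ℤ) :
    MeasurePreserving (shift z) (Measure.infinitePi fun _ : ℤ => ν)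
      (Measure.infinitePi fun _ : ℤ => ν) := by
  refine ⟨(measurableEmbedding_shift z).measurable, ?_⟩
  rw [shift_eq_piCongrLeft]
  exact Measure.infinitePi_map_piCongrLeft (fun _ : ℤ => ν) (Equiv.addRight (-z))

lemma condExpOn_Iic_shift (ν : Measure X) [IsProbabilityMeasure ν] (c z : ℤ)
    (h : (ℤ → X) → ℝ) (η : ℤ → X) :
    condExpOn (Measure.infinitePi fun _ : ℤ => ν) (Iic c) h (shift z η) =
      condExpOn (Measure.infinitePi fun _ : ℤ => ν) (Iic (c + z)) (h ∘ shift z) η := by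
  have hsplice : ∀ ζ,
      shift z (splice (Iic (c + z)) η ζ) = splice (Iic c) (shift z η) (shift z ζ) := by
    intro ζ
    funext x
    by_cases hx : x ≤ c
    · rw [shift, splice_of_mem (show x + z ∈ Iic (c + z) by simpa using hx),
        splice_of_mem (show x ∈ Iic c from hx)]
      rfl
    · rw [shift, splice_of_notMem (show x + z ∉ Iic (c + z) by simpa using hx),
        splice_of_notMem (show x ∉ Iic c from hx)]
      rfl
  simp only [condExpOn, Function.comp_apply, hsplice]
  exact ((measurePreserving_shift ν z).integral_comp (measurableEmbedding_shift z) _).symm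

end Shift

lemma IsIIDProduct.eq_infinitePi {X : Type*} [MeasurableSpace X] {ν : Measure X}
    {μ : Measure (ℤ → X)} (hμ : IsIIDProduct ν μ) :
    μ = Measure.infinitePi fun _ : ℤ => ν := by
  simpa only [hμ.2, Measure.map_id'] using hμ.1.map_fun_eq_infinitePi_map measurable_pi_apply

section Gradient

variable {X : Type*} [MeasurableSpace X] (ν : Measure X) (s : ℕ) (f : (ℤ → X) → ℝ)

local notation "μ" => Measure.infinitePi fun _ : ℤ => ν

/-- `E[f ∘ τ_k | η_x, x ≤ s]`. -/
noncomputable def pastProj (k : ℕ) : (ℤ → X) → ℝ :=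
  condExpOn μ (Iic (s : ℤ)) (f ∘ shift k)

noncomputable def autocorr (z : ℤ) : ℝ := ∫ η, f η * f (shift z η) ∂μ

variable {ν s f}

lemma dependsOn_pastProj (hloc : DependsOn f (Icc (-s) s)) (k : ℕ) :
    DependsOn (pastProj ν s f k) (Icc (-s) s) :=
  (hloc.comp_shift k).condExpOn.mono fun x hx => ⟨by linarith [hx.2.1], hx.1⟩

lemma dependsOn_Iic_pastProj (k : ℕ) : DependsOn (pastProj ν s f k) (Iic (s : ℤ)) :=
  dependsOn_condExpOn

variable [IsProbabilityMeasure ν]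

lemma pastProj_zero (hloc : DependsOn f (Icc (-s) s)) : pastProj ν s f 0 = f := by
  rw [pastProj, Nat.cast_zero, shift_zero, Function.comp_id,
    condExpOn_of_subset hloc Icc_subset_Iic_self]

lemma memLp_pastProj (hf : Measurable f) (hL : MemLp f 2 μ) (k : ℕ) :
    MemLp (pastProj ν s f k) 2 μ :=
  memLp_condExpOn (hf.comp (measurableEmbedding_shift _).measurable)
    (hL.comp_measurePreserving (measurePreserving_shift ν k))

lemma integral_sq_pastProj_le (hf : Measurable f) (hL : MemLp f 2 μ) (k : ℕ) :
    ∫ η, pastProj ν s f k η ^ 2 ∂μ ≤ ∫ η, f η ^ 2 ∂μ := by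
  refine (integral_sq_condExpOn_le (hf.comp (measurableEmbedding_shift _).measurable)
    (hL.comp_measurePreserving (measurePreserving_shift ν k))).trans_eq ?_
  exact (measurePreserving_shift ν k).integral_comp (measurableEmbedding_shift _) (f · ^ 2)

lemma integral_pastProj (hL : MemLp f 2 μ) (hmean : ∫ η, f η ∂μ = 0) (k : ℕ) :
    ∫ η, pastProj ν s f k η ∂μ = 0 := by
  rw [pastProj, integral_condExpOn
    ((hL.comp_measurePreserving (measurePreserving_shift ν k)).integrable one_le_two), ← hmean]
  exact (measurePreserving_shift ν k).integral_comp (measurableEmbedding_shift _) f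

lemma pastProj_eq_zero (hloc : DependsOn f (Icc (-s) s)) (hmean : ∫ η, f η ∂μ = 0) {k : ℕ}
    (hk : 2 * s < k) : pastProj ν s f k = 0 := by
  rw [pastProj, condExpOn_of_disjoint (hloc.comp_shift k), Function.comp_def,
    (measurePreserving_shift ν k).integral_comp (measurableEmbedding_shift _) f, hmean]
  · rfl
  · exact disjoint_left.mpr fun x hx hx' => by
      simp only [mem_Iic, mem_Icc] at hx hx'
      omega

lemma pastProj_shift_one (k : ℕ) (η : ℤ → X) :
    pastProj ν s f k (shift 1 η) = condExpOn μ (Iic (s + 1 : ℤ)) (f ∘ shift (k + 1 : ℕ)) η := by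
  have hcomp : (f ∘ shift k) ∘ shift 1 = f ∘ shift (k + 1 : ℕ) := by
    funext ξ
    simp only [Function.comp_apply, shift_shift, Nat.cast_add, Nat.cast_one]
  rw [pastProj, condExpOn_Iic_shift, hcomp]

lemma autocorr_neg (z : ℤ) : autocorr ν f (-z) = autocorr ν f z := by
  rw [autocorr, ← (measurePreserving_shift ν z).integral_comp (measurableEmbedding_shift z)]
  simp only [shift_shift, neg_add_cancel, shift_zero, id, autocorr, mul_comm]

lemma autocorr_eq_zero (hloc : DependsOn f (Icc (-s) s)) (hL : MemLp f 2 μ)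
    (hmean : ∫ η, f η ∂μ = 0) {z : ℤ} (hz : 2 * (s : ℤ) < |z|) : autocorr ν f z = 0 := by
  have hfz : MemLp (f ∘ shift z) 2 μ := hL.comp_measurePreserving (measurePreserving_shift ν z)
  have hdisj : Disjoint (Icc (-(s : ℤ)) s) (Icc (-s + z) (s + z)) :=
    disjoint_left.mpr fun x hx hx' => by
      simp only [mem_Icc] at hx hx'
      rcases abs_cases z with ⟨h, _⟩ | ⟨h, _⟩ <;> omega
  have hconst : condExpOn μ (Icc (-(s : ℤ)) s) (f ∘ shift z) = 0 := by
    rw [condExpOn_of_disjoint (hloc.comp_shift z) hdisj, Function.comp_def,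
      (measurePreserving_shift ν z).integral_comp (measurableEmbedding_shift z), hmean]
    rfl
  calc autocorr ν f z = ∫ η, (f ∘ shift z) η * f η ∂μ :=
        integral_congr_ae (.of_forall fun η => mul_comm _ _)
    _ = 0 := by rw [← integral_condExpOn_mul hfz hL hloc, hconst]; simp

lemma integral_mul_pastProj (hloc : DependsOn f (Icc (-s) s)) (hL : MemLp f 2 μ) (k : ℕ) :
    ∫ η, f η * pastProj ν s f k η ∂μ = autocorr ν f k := by
  have hfk : MemLp (f ∘ shift k) 2 μ := hL.comp_measurePreserving (measurePreserving_shift ν k)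
  calc ∫ η, f η * pastProj ν s f k η ∂μ = ∫ η, pastProj ν s f k η * f η ∂μ :=
        integral_congr_ae (.of_forall fun η => mul_comm _ _)
    _ = ∫ η, f (shift k η) * f η ∂μ :=
        integral_condExpOn_mul hfk hL (hloc.mono Icc_subset_Iic_self)
    _ = autocorr ν f k := integral_congr_ae (.of_forall fun η => mul_comm _ _)

lemma integral_pastProj_shift_mul_pastProj (hf : Measurable f) (hL : MemLp f 2 μ) (j k : ℕ) :
    ∫ η, pastProj ν s f j (shift 1 η) * pastProj ν s f (k + 1) η ∂μ =
      ∫ η, pastProj ν s f (j + 1) η * pastProj ν s f (k + 1) η ∂μ := by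
  have hfj : MemLp (f ∘ shift (j + 1 : ℕ)) 2 μ :=
    hL.comp_measurePreserving (measurePreserving_shift ν _)
  simp_rw [pastProj_shift_one]
  rw [integral_condExpOn_mul hfj (memLp_pastProj hf hL _)
    ((dependsOn_Iic_pastProj _).mono (Iic_subset_Iic.mpr (by omega)))]
  exact (integral_condExpOn_mul hfj (memLp_pastProj hf hL _) (dependsOn_Iic_pastProj _)).symm

lemma integral_sq_remainder (hf : Measurable f) (hloc : DependsOn f (Icc (-s) s))
    (hL : MemLp f 2 μ) (hmean : ∫ η, f η ∂μ = 0) :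
    ∫ η, (∑ k ∈ Finset.range (2 * s + 1),
      (pastProj ν s f k (shift 1 η) - pastProj ν s f (k + 1) η)) ^ 2 ∂μ =
      ∑ᶠ z, autocorr ν f z := by
  set P := pastProj ν s f
  set t : ℕ → ℕ → ℝ := fun j k => ∫ η, P j η * P k η ∂μ
  have hP : ∀ k, MemLp (P k) 2 μ := memLp_pastProj hf hL
  have hQ : ∀ k, MemLp (fun η => P k (shift 1 η)) 2 μ := fun k =>
    (hP k).comp_measurePreserving (measurePreserving_shift ν 1)
  have hQQ : ∀ j k, ∫ η, P j (shift 1 η) * P k (shift 1 η) ∂μ = t j k := fun j k =>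
    (measurePreserving_shift ν 1).integral_comp (measurableEmbedding_shift 1)
      fun η => P j η * P k η
  have hQP : ∀ j k, ∫ η, P j (shift 1 η) * P (k + 1) η ∂μ = t (j + 1) (k + 1) :=
    integral_pastProj_shift_mul_pastProj hf hL
  have hPQ : ∀ j k, ∫ η, P (j + 1) η * P k (shift 1 η) ∂μ = t (j + 1) (k + 1) := fun j k => by
    simp_rw [mul_comm (P (j + 1) _), hQP, t, mul_comm]
  have hlast : P (2 * s + 1) = 0 := pastProj_eq_zero hloc hmean (by omega)
  have hzero : ∀ k, t 0 k = autocorr ν f k := fun k => by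
    simp only [t, P, pastProj_zero hloc, integral_mul_pastProj hloc hL]
  have hzero' : ∀ k, t k 0 = autocorr ν f k := fun k => by
    simp only [t, mul_comm (P k _), ← hzero]
  rw [integral_sq_finsetSum (A := fun k η => P k (shift 1 η) - P (k + 1) η)
    fun k _ => (hQ k).sub (hP (k + 1))]
  have hterm : ∀ j k, ∫ η, (P j (shift 1 η) - P (j + 1) η) * (P k (shift 1 η) - P (k + 1) η) ∂μ =
      t j k - t (j + 1) (k + 1) := fun j k => by
    rw [integral_sub_mul_sub (hQ j) (hP (j + 1)) (hQ k) (hP (k + 1)), hQQ, hQP, hPQ]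
    ring
  simp only [hterm]
  rw [sum_range_sum_range_sub_succ t (2 * s) (fun k => by simp [t, hlast])
    (fun j => by simp [t, hlast]), finsum_eq_of_even (2 * s) autocorr_neg
    fun z hz => autocorr_eq_zero hloc hL hmean (by exact_mod_cast hz)]
  simp only [hzero, hzero', two_nsmul, Finset.sum_add_distrib]
  push_cast
  rfl

lemma sum_pastProj_succ (hloc : DependsOn f (Icc (-s) s)) (hmean : ∫ η, f η ∂μ = 0)
    (η : ℤ → X) :
    ∑ k ∈ Finset.range (2 * s + 1), pastProj ν s f (k + 1) η =
      ∑ k ∈ Finset.range (2 * s + 1), pastProj ν s f k η - f η := by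
  rw [Finset.sum_range_succ, pastProj_eq_zero hloc hmean (by omega),
    Finset.sum_range_succ' _ (2 * s), pastProj_zero hloc]
  simp

theorem exists_gradient_of_measurable (hf : Measurable f) (hloc : DependsOn f (Icc (-s) s))
    (hL : MemLp f 2 μ) (hmean : ∫ η, f η ∂μ = 0) (hker : ∑ᶠ z, autocorr ν f z = 0) :
    ∃ g : (ℤ → X) → ℝ, DependsOn g (Icc (-s) s) ∧ MemLp g 2 μ ∧ ∫ η, g η ∂μ = 0 ∧
      (f =ᵐ[μ] fun η => g (shift 1 η) - g η) ∧
      ∫ η, g η ^ 2 ∂μ ≤ (2 * s + 1) ^ 2 * ∫ η, f η ^ 2 ∂μ := by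
  set P := pastProj ν s f with hPdef
  have hP : ∀ k, MemLp (P k) 2 μ := memLp_pastProj hf hL
  refine ⟨fun η => -∑ k ∈ Finset.range (2 * s + 1), P k η, fun η η' hag => ?_,
    (memLp_finsetSum _ fun k _ => hP k).neg, ?_, ?_, ?_⟩
  · simp only [P, dependsOn_pastProj hloc _ hag]
  · rw [integral_neg, integral_finsetSum _ fun k _ => (hP k).integrable one_le_two]
    simp [P, integral_pastProj hL hmean]
  · have hR : MemLp (fun η => ∑ k ∈ Finset.range (2 * s + 1), (P k (shift 1 η) - P (k + 1) η))
        2 μ := memLp_finsetSum _ fun k _ =>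
      ((hP k).comp_measurePreserving (measurePreserving_shift ν 1)).sub (hP (k + 1))
    have hR0 := (integral_eq_zero_iff_of_nonneg (fun η => sq_nonneg _) hR.integrable_sq).mp
      ((integral_sq_remainder hf hloc hL hmean).trans hker)
    filter_upwards [hR0] with η hη
    have hsum := sum_pastProj_succ hloc hmean η
    rw [← hPdef] at hsum
    simp only [Pi.zero_apply, pow_eq_zero_iff two_ne_zero, Finset.sum_sub_distrib, hsum] at hη
    linarith
  · simp only [neg_sq]
    refine (integral_sq_finsetSum_le (fun k _ => hP k)
      fun k _ => integral_sq_pastProj_le hf hL k).trans_eq ?_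
    simp

end Gradient

theorem stmt13_general {X : Type*} [MeasurableSpace X] (ν : Measure X) [IsProbabilityMeasure ν]
    (μ : Measure (ℤ → X)) (hμ : IsIIDProduct ν μ)
    (s : ℕ) (f : (ℤ → X) → ℝ) (hloc : DependsOnWindow s f) (hL : MemLp f 2 μ)
    (hmean : ∫ η, f η ∂μ = 0)
    (hker : ∑ᶠ z : ℤ, ∫ η, f η * f (fun x => η (x + z)) ∂μ = 0) :
    ∃ g : (ℤ → X) → ℝ, IsLocal g ∧ MemLp g 2 μ ∧ (∫ η, g η ∂μ = 0) ∧
      (f =ᵐ[μ] fun η => g (fun x => η (x + 1)) - g η) ∧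
      ∫ η, (g η) ^ 2 ∂μ ≤ (2 * (s : ℝ) + 1) ^ 2 * ∫ η, (f η) ^ 2 ∂μ := by
  obtain rfl := hμ.eq_infinitePi
  have hW : DependsOn f (Icc (-s) s) := fun η η' hag => hloc η η' fun x hx => hag x (abs_le.mp hx)
  obtain ⟨f', hf', hW', hff'⟩ := exists_measurable_dependsOn_ae_eq hL.1 hW
  have hcorr : ∀ z, autocorr ν f z = autocorr ν f' z := fun z => by
    refine integral_congr_ae ?_
    filter_upwards [hff', (measurePreserving_shift ν z).quasiMeasurePreserving.ae_eq_comp hff']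
      with η h₁ h₂
    simp only [h₁, Function.comp_apply] at h₂ ⊢
    rw [h₂]
  have hker' : ∑ᶠ z, autocorr ν f' z = 0 := by
    rw [← finsum_congr hcorr]
    exact hker
  obtain ⟨g, hgW, hg, hg0, hgrad, hbound⟩ := exists_gradient_of_measurable hf' hW'
    (hL.ae_eq hff') (by rwa [← integral_congr_ae hff']) hker'
  refine ⟨g, ⟨Finset.Icc (-s) s, fun η η' hag => hgW fun x hx => hag x (by simpa using hx)⟩,
    hg, hg0, hff'.trans hgrad, ?_⟩
  have hsq : ∫ η, f η ^ 2 ∂Measure.infinitePi (fun _ : ℤ => ν) = ∫ η, f' η ^ 2 ∂_ :=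
    integral_congr_ae (hff'.fun_comp (· ^ 2))
  rwa [hsq]

/-- in the setting of the one-dimensional main theorem (`f` local
mean-zero, depending on coordinates in `{-s_f,…,s_f}`, with `∑_z ⟨f, τ_z f⟩ = 0`),
the gradient representative `g` with `f = τg − g` can be chosen with the bound
`⟨g²⟩ ≤ (2 s_f + 1)² ⟨f²⟩`. -/
theorem stmt13 {X : Type*} [MeasurableSpace X] (ν : Measure X) [IsProbabilityMeasure ν]
    [TopologicalSpace.SeparableSpace (Lp ℝ 2 ν)]
    (μ : Measure (ℤ → X)) [IsProbabilityMeasure μ] (hμ : IsIIDProduct ν μ)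
    (s : ℕ) (f : (ℤ → X) → ℝ) (hloc : DependsOnWindow s f) (hL : MemLp f 2 μ)
    (hmean : ∫ η, f η ∂μ = 0)
    (hker : ∑ᶠ z : ℤ, ∫ η, f η * f (fun x => η (x + z)) ∂μ = 0) :
    ∃ g : (ℤ → X) → ℝ, IsLocal g ∧ MemLp g 2 μ ∧ (∫ η, g η ∂μ = 0) ∧
      (f =ᵐ[μ] fun η => g (fun x => η (x + 1)) - g η) ∧
      ∫ η, (g η) ^ 2 ∂μ ≤ (2 * (s : ℝ) + 1) ^ 2 * ∫ η, (f η) ^ 2 ∂μ :=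
  stmt13_general ν μ hμ s f hloc hL hmean hker
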